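/- arXiv:2508.03531 — 2 statements merged into one kernel-verified Lean document; each statement's English description precedes it below -/
import Mathlib

section
/- In a finite, simple, cubic, bipartite, connected graph G, for every vertex v, the graph G − v is connected. -/
open Finset

private lemma fin2_trick : ∀ p q r : Fin 2, p ≠ q → r ≠ q → p = r := by decide

/-- Key counting lemma: for any component `C` of `G - v`, exactly 3 edges join `C` to `v`. -/
lemma attach_card_eq_three
    {V : Type} [Fintype V] [DecidableEq V] (G : SimpleGraph V) [DecidableRel G.Adj]
    (hcubic : ∀ v : V, G.degree v = 3)
    (c : G.Coloring (Fin 2))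
    (hconn : G.Connected) (v : V)
    (C : (G.induce ({v}ᶜ : Set V)).ConnectedComponent) :
    Nat.card {w : ({v}ᶜ : Set V) //
        G.Adj v ↑w ∧ (G.induce ({v}ᶜ : Set V)).connectedComponentMk w = C} = 3 := by
  classical
  let P : V → Prop := fun x =>
    ∃ h : x ∈ ({v}ᶜ : Set V), (G.induce ({v}ᶜ : Set V)).connectedComponentMk ⟨x, h⟩ = C
  have hKmem : ∀ x : V, x ∈ ({v}ᶜ : Set V) ↔ x ≠ v := fun x => Set.mem_compl_singleton_iff
  have hP1 : ∀ x, P x → x ≠ v := fun x ⟨h, _⟩ => (hKmem x).1 h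
  have hP2 : ∀ x y, P x → G.Adj x y → y ≠ v → P y := by
    rintro x y ⟨hx, hC⟩ hadj hy
    have hyK : y ∈ ({v}ᶜ : Set V) := (hKmem y).2 hy
    refine ⟨hyK, ?_⟩
    rw [← hC]
    apply SimpleGraph.ConnectedComponent.sound
    have : (G.induce ({v}ᶜ : Set V)).Adj ⟨y, hyK⟩ ⟨x, hx⟩ := by
      simp only [SimpleGraph.comap_adj, Function.Embedding.coe_subtype]
      exact hadj.symm
    exact this.reachable
  -- the two bipartition classes of the component C
  let a : Finset V := univ.filter (fun x => P x ∧ c x = c v)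
  let b : Finset V := univ.filter (fun x => P x ∧ c x ≠ c v)
  -- neighbors of vertices in `a` all lie in `b`
  have hA : ∀ x ∈ a, b.filter (fun y => G.Adj x y) = G.neighborFinset x := by
    intro x hx
    simp only [a, mem_filter, mem_univ, true_and] at hx
    obtain ⟨hPx, hcx⟩ := hx
    ext y
    simp only [mem_filter, SimpleGraph.mem_neighborFinset, mem_univ, true_and, b]
    constructor
    · rintro ⟨-, hadj⟩; exact hadj
    · intro hadj
      have hcy : c y ≠ c v := by
        intro h; exact (c.valid hadj) (by rw [hcx, h])
      have hyv : y ≠ v := by intro h; exact hcy (by rw [h])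
      exact ⟨⟨hP2 _ _ hPx hadj hyv, hcy⟩, hadj⟩
  -- neighbors other than `v` of vertices in `b` all lie in `a`
  have hB : ∀ y ∈ b, a.filter (fun x => G.Adj x y) = (G.neighborFinset y).erase v := by
    intro y hy
    simp only [b, mem_filter, mem_univ, true_and] at hy
    obtain ⟨hPy, hcy⟩ := hy
    ext x
    simp only [mem_filter, mem_erase, SimpleGraph.mem_neighborFinset, mem_univ, true_and, a]
    constructor
    · rintro ⟨⟨hPx, -⟩, hadj⟩
      exact ⟨hP1 _ hPx, hadj.symm⟩
    · rintro ⟨hxv, hadj⟩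
      have hcx : c x = c v := fin2_trick _ _ _ (c.valid hadj.symm) (Ne.symm hcy)
      exact ⟨⟨hP2 _ _ hPy hadj hxv, hcx⟩, hadj.symm⟩
  -- the attachment number t
  set t : ℕ := (b.filter (fun y => G.Adj v y)).card with ht
  -- double counting the edges between a and b
  have hswap : ∑ x ∈ a, (b.filter (fun y => G.Adj x y)).card
      = ∑ y ∈ b, (a.filter (fun x => G.Adj x y)).card := by
    simp only [Finset.card_filter]
    exact Finset.sum_comm
  have hLHS : ∑ x ∈ a, (b.filter (fun y => G.Adj x y)).card = 3 * a.card := by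
    have h3 : ∀ x ∈ a, (b.filter (fun y => G.Adj x y)).card = 3 := fun x hx => by
      rw [hA x hx, G.card_neighborFinset_eq_degree, hcubic]
    rw [Finset.sum_congr rfl h3, Finset.sum_const, smul_eq_mul, mul_comm]
  have hterm : ∀ y ∈ b,
      (a.filter (fun x => G.Adj x y)).card + (if G.Adj v y then 1 else 0) = 3 := by
    intro y hy
    rw [hB y hy]
    by_cases hv : G.Adj v y
    · have hvmem : v ∈ G.neighborFinset y := by
        rw [SimpleGraph.mem_neighborFinset]; exact hv.symm
      have hdeg : (G.neighborFinset y).card = 3 := by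
        rw [G.card_neighborFinset_eq_degree, hcubic]
      rw [Finset.card_erase_of_mem hvmem, if_pos hv]
      omega
    · have hvmem : v ∉ G.neighborFinset y := by
        rw [SimpleGraph.mem_neighborFinset]; exact fun h => hv h.symm
      rw [Finset.erase_eq_of_notMem hvmem, if_neg hv,
        G.card_neighborFinset_eq_degree, hcubic]
  have hRHS : ∑ y ∈ b, (a.filter (fun x => G.Adj x y)).card + t = 3 * b.card := by
    rw [ht, Finset.card_filter, ← Finset.sum_add_distrib,
      Finset.sum_congr rfl hterm, Finset.sum_const, smul_eq_mul, mul_comm]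
  -- t ≤ 3
  have ht3 : t ≤ 3 := by
    have hsub : b.filter (fun y => G.Adj v y) ⊆ G.neighborFinset v := by
      intro y hy
      rw [SimpleGraph.mem_neighborFinset]
      exact (mem_filter.1 hy).2
    calc t ≤ (G.neighborFinset v).card := Finset.card_le_card hsub
      _ = 3 := by rw [G.card_neighborFinset_eq_degree, hcubic]
  -- t ≥ 1 : every component of G - v attaches to v
  have ht1 : 1 ≤ t := by
    obtain ⟨x0, hx0⟩ := C.exists_rep
    have hPx0 : P ↑x0 := ⟨x0.2, by rwa [Subtype.coe_eta]⟩
    obtain ⟨p⟩ := hconn.preconnected ↑x0 v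
    have hvP : v ∉ setOf P := fun h => hP1 v h rfl
    obtain ⟨d, -, hd1, hd2⟩ := p.exists_boundary_dart (setOf P) hPx0 hvP
    have hdv : d.toProd.2 = v := by
      by_contra hne
      exact hd2 (hP2 _ _ hd1 d.adj hne)
    have hw1 : G.Adj v d.toProd.1 := by rw [← hdv]; exact d.adj.symm
    have hw2 : P d.toProd.1 := hd1
    set w := d.toProd.1
    have hcw : c w ≠ c v := fun h => (c.valid hw1) h.symm
    have hwmem : w ∈ b.filter (fun y => G.Adj v y) := by
      simp only [b, mem_filter, mem_univ, true_and]
      exact ⟨⟨hw2, hcw⟩, hw1⟩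
    rw [ht]
    exact Finset.card_pos.2 ⟨w, hwmem⟩
  have hteq : t = 3 := by omega
  -- identify the subtype with the filter finset
  have hmemP : ∀ y ∈ b.filter (fun y => G.Adj v y), P y ∧ G.Adj v y := by
    intro y hy
    have h1 := (mem_filter.1 hy).1
    simp only [b, mem_filter, mem_univ, true_and] at h1
    exact ⟨h1.1, (mem_filter.1 hy).2⟩
  have hcard : Nat.card {w : ({v}ᶜ : Set V) //
      G.Adj v ↑w ∧ (G.induce ({v}ᶜ : Set V)).connectedComponentMk w = C}
      = (b.filter (fun y => G.Adj v y)).card := by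
    rw [← Nat.card_eq_finsetCard]
    apply Nat.card_congr
    refine
      { toFun := fun w => ⟨(w.1 : V), ?_⟩
        invFun := fun y =>
          ⟨⟨y.1, ((hmemP y.1 y.2).1).choose⟩, (hmemP y.1 y.2).2,
            ((hmemP y.1 y.2).1).choose_spec⟩
        left_inv := fun w => Subtype.ext (Subtype.ext rfl)
        right_inv := fun y => Subtype.ext rfl }
    obtain ⟨⟨y, hyK⟩, hadj, hcomp⟩ := w
    simp only [b, mem_filter, mem_univ, true_and]
    exact ⟨⟨⟨hyK, hcomp⟩, fun h => (c.valid hadj) h.symm⟩, hadj⟩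
  rw [hcard, ← ht, hteq]

/-- In a finite, simple, cubic, bipartite, connected graph, for every vertex `v`,
the number of edges joining any connected component of `G − v` to `v` is neither 1 nor 2;
in fact, removing any single vertex leaves the graph connected. -/
theorem cubic_bipartite_no_small_attachment
    {V : Type} [Fintype V] [DecidableEq V] (G : SimpleGraph V) [DecidableRel G.Adj]
    (hcubic : ∀ v : V, G.degree v = 3)
    (hbip : G.Colorable 2)
    (hconn : G.Connected) :
    ∀ v : V,
      (∀ C : (G.induce ({v}ᶜ : Set V)).ConnectedComponent,
        Nat.card {w : ({v}ᶜ : Set V) //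
            G.Adj v ↑w ∧ (G.induce ({v}ᶜ : Set V)).connectedComponentMk w = C} ≠ 1 ∧
        Nat.card {w : ({v}ᶜ : Set V) //
            G.Adj v ↑w ∧ (G.induce ({v}ᶜ : Set V)).connectedComponentMk w = C} ≠ 2) ∧
      (G.induce ({v}ᶜ : Set V)).Connected := by
  classical
  intro v
  obtain ⟨c⟩ := hbip
  have key := attach_card_eq_three G hcubic c hconn v
  -- every neighbor of v lies in every component C of G - v
  have hall : ∀ (C : (G.induce ({v}ᶜ : Set V)).ConnectedComponent) (w : V), G.Adj v w →
      ∃ h : w ∈ ({v}ᶜ : Set V),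
        (G.induce ({v}ᶜ : Set V)).connectedComponentMk ⟨w, h⟩ = C := by
    intro C w hw
    let T := {u : ({v}ᶜ : Set V) //
      G.Adj v ↑u ∧ (G.induce ({v}ᶜ : Set V)).connectedComponentMk u = C}
    let N := {x : V // x ∈ G.neighborFinset v}
    let f : T → N := fun u => ⟨↑↑u, by rw [SimpleGraph.mem_neighborFinset]; exact u.2.1⟩
    have hinj : Function.Injective f := by
      intro u1 u2 h
      apply Subtype.ext; apply Subtype.ext
      have h' := congrArg Subtype.val h
      simpa only [f] using h' 
    have hcardN : Nat.card N = 3 := by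
      rw [Nat.card_eq_finsetCard, G.card_neighborFinset_eq_degree, hcubic]
    have hbij : Function.Bijective f :=
      (Nat.bijective_iff_injective_and_card f).2 ⟨hinj, by rw [key C, hcardN]⟩
    obtain ⟨⟨⟨w', hw'K⟩, hadj, hcomp⟩, hu⟩ :=
      hbij.2 ⟨w, by rw [SimpleGraph.mem_neighborFinset]; exact hw⟩
    have hww : w' = w := congrArg Subtype.val hu
    subst hww
    exact ⟨hw'K, hcomp⟩
  refine ⟨fun C => ⟨by rw [key C]; omega, by rw [key C]; omega⟩, ?_⟩
  -- v has a neighbor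
  have hpos : 0 < (G.neighborFinset v).card := by
    rw [G.card_neighborFinset_eq_degree, hcubic]; omega
  obtain ⟨u0, hu0m⟩ := Finset.card_pos.1 hpos
  have hu0 : G.Adj v u0 := (SimpleGraph.mem_neighborFinset G v u0).1 hu0m
  have hu0K : u0 ∈ ({v}ᶜ : Set V) := Set.mem_compl_singleton_iff.2 hu0.ne'
  haveI : Nonempty ({v}ᶜ : Set V) := ⟨⟨u0, hu0K⟩⟩
  refine SimpleGraph.Connected.mk (fun x y => ?_)
  obtain ⟨h1, e1⟩ := hall ((G.induce ({v}ᶜ : Set V)).connectedComponentMk x) u0 hu0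
  obtain ⟨h2, e2⟩ := hall ((G.induce ({v}ᶜ : Set V)).connectedComponentMk y) u0 hu0
  have hcc : (G.induce ({v}ᶜ : Set V)).connectedComponentMk x
      = (G.induce ({v}ᶜ : Set V)).connectedComponentMk y := by
    rw [← e1, ← e2]
  exact SimpleGraph.ConnectedComponent.exact hcc
end

section
/- There is no finite, simple, cubic, bipartite, planar, connected graph embedded in the plane, with all faces of size in {4,6,8}, in which every 4-face is adjacent to at least two 8-faces and every 8-face is adjacent to at most two 4-faces. -/
/-- A combinatorial plane embedding of a finite simple graph `G`: a finite set of faces,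
each with a boundary set of edges, such that every edge lies on exactly two faces and
Euler's formula `V - E + F = 2` holds. -/
structure PlaneEmbedding {V : Type} [Fintype V] [DecidableEq V]
    (G : SimpleGraph V) [DecidableRel G.Adj] : Type 1 where
  Face : Type
  [faceFintype : Fintype Face]
  boundary : Face → Finset (Sym2 V)
  boundary_sub : ∀ f, boundary f ⊆ G.edgeFinset
  edge_two_faces : ∀ e ∈ G.edgeFinset, Nat.card {f : Face // e ∈ boundary f} = 2
  euler : (Fintype.card V : ℤ) - (G.edgeFinset.card : ℤ) + (Nat.card Face : ℤ) = 2

attribute [instance] PlaneEmbedding.faceFintype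

/-- The size of a face: the number of edges on its boundary. -/
def PlaneEmbedding.size {V : Type} [Fintype V] [DecidableEq V]
    {G : SimpleGraph V} [DecidableRel G.Adj] (P : PlaneEmbedding G) (f : P.Face) : ℕ :=
  (P.boundary f).card

/-- Two faces are adjacent if they are distinct and share a boundary edge. -/
def PlaneEmbedding.FaceAdj {V : Type} [Fintype V] [DecidableEq V]
    {G : SimpleGraph V} [DecidableRel G.Adj] (P : PlaneEmbedding G)
    (f g : P.Face) : Prop :=
  f ≠ g ∧ ∃ e, e ∈ P.boundary f ∧ e ∈ P.boundary g

/-- There is no finite, simple, cubic, bipartite, planar, connected embedded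
graph with all faces of size in {4,6,8} in which every 4-face is adjacent to at least two
8-faces and every 8-face is adjacent to at most two 4-faces. -/
theorem no_such_embedded_graph
    {V : Type} [Fintype V] [DecidableEq V] (G : SimpleGraph V) [DecidableRel G.Adj]
    (P : PlaneEmbedding G)
    (hcubic : ∀ v : V, G.degree v = 3)
    (hbip : G.Colorable 2)
    (hconn : G.Connected)
    (hfaces : ∀ f : P.Face, P.size f = 4 ∨ P.size f = 6 ∨ P.size f = 8)
    (h4 : ∀ f : P.Face, P.size f = 4 →
      2 ≤ Nat.card {g : P.Face // P.size g = 8 ∧ P.FaceAdj f g})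
    (h8 : ∀ f : P.Face, P.size f = 8 →
      Nat.card {g : P.Face // P.size g = 4 ∧ P.FaceAdj f g} ≤ 2) :
    False := by
  classical
  have hsymm : ∀ f g : P.Face, P.FaceAdj f g ↔ P.FaceAdj g f := by
    intro f g
    constructor <;> rintro ⟨hne, e, h1, h2⟩ <;> exact ⟨Ne.symm hne, e, h2, h1⟩
  -- handshake: 3|V| = 2|E|
  have hV : 3 * Fintype.card V = 2 * G.edgeFinset.card := by
    have h := G.sum_degrees_eq_twice_card_edges
    simp only [hcubic, Finset.sum_const, smul_eq_mul, Finset.card_univ] at h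
    omega
  -- boundary f as a filter of edgeFinset
  have hb : ∀ f : P.Face, P.boundary f = G.edgeFinset.filter (fun e => e ∈ P.boundary f) := by
    intro f; ext e
    simp only [Finset.mem_filter]
    exact ⟨fun h => ⟨P.boundary_sub f h, h⟩, fun h => h.2⟩
  -- sum of face sizes = 2|E|
  have hsum : ∑ f : P.Face, P.size f = 2 * G.edgeFinset.card := by
    calc ∑ f : P.Face, P.size f
        = ∑ f : P.Face, ∑ e ∈ G.edgeFinset, (if e ∈ P.boundary f then 1 else 0) := by
          refine Finset.sum_congr rfl fun f _ => ?_
          have h1 : P.size f = (G.edgeFinset.filter (fun e => e ∈ P.boundary f)).card :=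
            congrArg Finset.card (hb f)
          rw [h1, Finset.card_filter]
      _ = ∑ e ∈ G.edgeFinset, ∑ f : P.Face, (if e ∈ P.boundary f then 1 else 0) :=
          Finset.sum_comm
      _ = ∑ _e ∈ G.edgeFinset, 2 := by
          refine Finset.sum_congr rfl fun e he => ?_
          have h2 := P.edge_two_faces e he
          rw [Nat.card_eq_fintype_card, Fintype.card_subtype] at h2
          rw [← Finset.card_filter]
          exact h2
      _ = 2 * G.edgeFinset.card := by rw [Finset.sum_const, smul_eq_mul, mul_comm]
  set F4 := Finset.univ.filter (fun f : P.Face => P.size f = 4) with hF4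
  set F6 := Finset.univ.filter (fun f : P.Face => P.size f = 6) with hF6
  set F8 := Finset.univ.filter (fun f : P.Face => P.size f = 8) with hF8
  have hcard : Fintype.card P.Face = F4.card + F6.card + F8.card := by
    rw [hF4, hF6, hF8, Finset.card_filter, Finset.card_filter, Finset.card_filter,
      ← Finset.sum_add_distrib, ← Finset.sum_add_distrib, ← Finset.card_univ,
      Finset.card_eq_sum_ones]
    exact Finset.sum_congr rfl fun f _ => by rcases hfaces f with h|h|h <;> simp [h]
  have hsizes : ∑ f : P.Face, P.size f = 4 * F4.card + 6 * F6.card + 8 * F8.card := by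
    rw [hF4, hF6, hF8, Finset.card_filter, Finset.card_filter, Finset.card_filter,
      Finset.mul_sum, Finset.mul_sum, Finset.mul_sum,
      ← Finset.sum_add_distrib, ← Finset.sum_add_distrib]
    exact Finset.sum_congr rfl fun f _ => by rcases hfaces f with h|h|h <;> simp [h]
  have heuler := P.euler
  rw [Nat.card_eq_fintype_card] at heuler
  -- double counting adjacent (4-face, 8-face) pairs
  have hA : ∀ f ∈ F4,
      2 ≤ (Finset.univ.filter (fun g : P.Face => P.size g = 8 ∧ P.FaceAdj f g)).card := by
    intro f hf
    rw [hF4, Finset.mem_filter] at hf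
    have h := h4 f hf.2
    rwa [Nat.card_eq_fintype_card, Fintype.card_subtype] at h
  have hB : ∀ g ∈ F8,
      (Finset.univ.filter (fun f : P.Face => P.size f = 4 ∧ P.FaceAdj g f)).card ≤ 2 := by
    intro g hg
    rw [hF8, Finset.mem_filter] at hg
    have h := h8 g hg.2
    rwa [Nat.card_eq_fintype_card, Fintype.card_subtype] at h
  set M := ∑ f : P.Face, ∑ g : P.Face,
      (if P.size f = 4 ∧ P.size g = 8 ∧ P.FaceAdj f g then 1 else 0) with hM
  have hMl : ∑ f ∈ F4,
      (Finset.univ.filter (fun g : P.Face => P.size g = 8 ∧ P.FaceAdj f g)).card = M := by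
    rw [hM, hF4, Finset.sum_filter]
    refine Finset.sum_congr rfl fun f _ => ?_
    by_cases h : P.size f = 4
    · rw [if_pos h, Finset.card_filter]
      exact Finset.sum_congr rfl fun g _ => by simp [h]
    · rw [if_neg h]
      symm
      refine Finset.sum_eq_zero fun g _ => ?_
      simp [h]
  have hMr : ∑ g ∈ F8,
      (Finset.univ.filter (fun f : P.Face => P.size f = 4 ∧ P.FaceAdj g f)).card = M := by
    rw [hM, hF8, Finset.sum_filter]
    rw [Finset.sum_comm]
    refine Finset.sum_congr rfl fun g _ => ?_
    by_cases h : P.size g = 8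
    · rw [if_pos h, Finset.card_filter]
      refine Finset.sum_congr rfl fun f _ => ?_
      refine if_congr ?_ rfl rfl
      constructor
      · rintro ⟨a, c⟩; exact ⟨a, h, (hsymm g f).mp c⟩
      · rintro ⟨a, _, c⟩; exact ⟨a, (hsymm f g).mp c⟩
    · rw [if_neg h]
      symm
      refine Finset.sum_eq_zero fun f _ => ?_
      rw [if_neg]; rintro ⟨_, hc, _⟩; exact h hc
  have h1 : 2 * F4.card ≤ M := by
    rw [← hMl]
    calc 2 * F4.card = ∑ _f ∈ F4, 2 := by rw [Finset.sum_const, smul_eq_mul, mul_comm]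
      _ ≤ _ := Finset.sum_le_sum hA
  have h2 : M ≤ 2 * F8.card := by
    rw [← hMr]
    calc ∑ g ∈ F8, _ ≤ ∑ _g ∈ F8, 2 := Finset.sum_le_sum hB
      _ = 2 * F8.card := by rw [Finset.sum_const, smul_eq_mul, mul_comm]
  rw [hsizes] at hsum
  omega
end
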